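/- Consider a single-hidden-layer RNN θ = (W_rec, W_ff, b, C) with W_rec ∈ ℝ^{d×d}, W_ff ∈ ℝ^{d×p}, b ∈ ℝ^d with all entries of b strictly nonzero, and C ∈ ℝ^{m×d}. Define the squared norm ‖θ‖² = ‖W_rec‖_F² + ‖W_ff‖_F² + ‖b‖² + ‖C‖_F². Suppose a scaled permutation M = P̃ D (P̃ permutation, D = diag(e^{τ_1},…,e^{τ_d})) satisfies: ‖(M W_rec M⁻¹, M W_ff, M b, C M⁻¹)‖² ≤ ‖(M' W_rec M'⁻¹, M' W_ff, M' b, C M'⁻¹)‖² for all scaled permutations M', and likewise the identity I achieves this minimum. Then D = I. -/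

import Mathlib

open Matrix

/-- Squared Frobenius norm of a matrix. -/
noncomputable def frobSq {m n : ℕ} (A : Matrix (Fin m) (Fin n) ℝ) : ℝ :=
  ∑ i, ∑ j, (A i j) ^ 2

/-- Squared Euclidean norm of a vector. -/
noncomputable def vecSq {n : ℕ} (v : Fin n → ℝ) : ℝ := ∑ i, (v i) ^ 2

/-- Squared norm of the RNN parameters transformed by `M`,
namely `(M Wrec M⁻¹, M Wff, M b, C M⁻¹)`. -/
noncomputable def rnnCost {d p m : ℕ} (Wrec : Matrix (Fin d) (Fin d) ℝ)
    (Wff : Matrix (Fin d) (Fin p) ℝ) (b : Fin d → ℝ)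
    (C : Matrix (Fin m) (Fin d) ℝ) (M : Matrix (Fin d) (Fin d) ℝ) : ℝ :=
  frobSq (M * Wrec * M⁻¹) + frobSq (M * Wff) + vecSq (M.mulVec b)
    + frobSq (C * M⁻¹)

/-!
Conjugating by a permutation only permutes entries, so the cost of `P̃ D` is the cost of `D`, a
sum of squares `t(D)²` where each `t` is a weight times a monomial in the `D i ^ (±1)`. For the
geometric mean `G i = √(D i * E i)` one has `t(G)² = t(D) t(E)`, hence
`2 cost(G) ≤ cost(D) + cost(E)`, and the bias terms contribute a defect `∑ (D i b i - E i b i)²`.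
If `D` and `E = 1` both minimize the cost, this defect vanishes, and `b i ≠ 0` gives `D i = 1`.
-/

lemma Matrix.inv_permMatrix {n R : Type*} [Fintype n] [DecidableEq n] [CommRing R]
    (σ : Equiv.Perm n) : (σ.permMatrix R)⁻¹ = σ⁻¹.permMatrix R :=
  inv_eq_left_inv <| by rw [← permMatrix_mul, mul_inv_cancel, permMatrix_one]

lemma two_mul_sq_le_of_sq_eq_mul {R : Type*} [CommRing R] [LinearOrder R] [IsStrictOrderedRing R]
    {u v w : R} (h : w ^ 2 = u * v) : 2 * w ^ 2 ≤ u ^ 2 + v ^ 2 := by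
  rw [h, ← mul_assoc]
  exact two_mul_le_add_sq u v

lemma two_mul_sq_add_sq_sub_eq {R : Type*} [CommRing R] {u v w : R} (h : w ^ 2 = u * v) :
    2 * w ^ 2 + (u - v) ^ 2 = u ^ 2 + v ^ 2 := by
  rw [h]; ring

lemma two_mul_sum_le_sum_add_sum {ι R : Type*} [Semiring R] [PartialOrder R]
    [IsOrderedAddMonoid R] (s : Finset ι) {a b c : ι → R} (h : ∀ k, 2 * a k ≤ b k + c k) :
    2 * ∑ k ∈ s, a k ≤ ∑ k ∈ s, b k + ∑ k ∈ s, c k := by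
  rw [Finset.mul_sum, ← Finset.sum_add_distrib]
  exact Finset.sum_le_sum fun k _ => h k

section Permutation

variable {m n : ℕ}

lemma frobSq_submatrix (A : Matrix (Fin m) (Fin n) ℝ) (σ : Equiv.Perm (Fin m))
    (τ : Equiv.Perm (Fin n)) : frobSq (A.submatrix σ τ) = frobSq A := by
  simp only [frobSq, submatrix_apply]
  exact (Equiv.sum_comp σ (fun i => ∑ j, A i (τ j) ^ 2)).trans
    (Finset.sum_congr rfl fun i _ => Equiv.sum_comp τ (fun j => A i j ^ 2))

lemma frobSq_permMatrix_mul (σ : Equiv.Perm (Fin m)) (A : Matrix (Fin m) (Fin n) ℝ) :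
    frobSq (σ.permMatrix ℝ * A) = frobSq A := by
  rw [PEquiv.toMatrix_toPEquiv_mul]
  exact frobSq_submatrix A σ (Equiv.refl _)

lemma frobSq_mul_permMatrix (A : Matrix (Fin m) (Fin n) ℝ) (σ : Equiv.Perm (Fin n)) :
    frobSq (A * σ.permMatrix ℝ) = frobSq A := by
  rw [PEquiv.mul_toMatrix_toPEquiv]
  exact frobSq_submatrix A (Equiv.refl _) σ.symm

lemma vecSq_permMatrix_mulVec (σ : Equiv.Perm (Fin n)) (v : Fin n → ℝ) :
    vecSq (σ.permMatrix ℝ *ᵥ v) = vecSq v := by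
  rw [permMatrix_mulVec]
  exact Equiv.sum_comp σ (fun i => v i ^ 2)

end Permutation

section RNN

variable {d p m : ℕ} (Wrec : Matrix (Fin d) (Fin d) ℝ) (Wff : Matrix (Fin d) (Fin p) ℝ)
  (b : Fin d → ℝ) (C : Matrix (Fin m) (Fin d) ℝ)

lemma rnnCost_permMatrix_mul (σ : Equiv.Perm (Fin d)) (M : Matrix (Fin d) (Fin d) ℝ) :
    rnnCost Wrec Wff b C (σ.permMatrix ℝ * M) = rnnCost Wrec Wff b C M := by
  simp only [rnnCost, Matrix.mul_inv_rev, inv_permMatrix, ← Matrix.mul_assoc,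
    ← mulVec_mulVec, vecSq_permMatrix_mulVec, frobSq_mul_permMatrix]
  simp only [Matrix.mul_assoc, frobSq_permMatrix_mul]

lemma rnnCost_diagonal {E : Fin d → ℝ} (hE : ∀ i, E i ≠ 0) :
    rnnCost Wrec Wff b C (diagonal E) =
      (∑ i, ∑ j, (E i * Wrec i j * (E j)⁻¹) ^ 2) + (∑ i, ∑ j, (E i * Wff i j) ^ 2)
        + (∑ i, (E i * b i) ^ 2) + ∑ i, ∑ j, (C i j * (E j)⁻¹) ^ 2 := by
  have hinv : (diagonal E)⁻¹ = diagonal E⁻¹ := inv_eq_left_inv <| by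
    rw [diagonal_mul_diagonal, ← diagonal_one]
    exact congrArg diagonal (funext fun i => inv_mul_cancel₀ (hE i))
  simp only [rnnCost, frobSq, vecSq, hinv, mul_diagonal, diagonal_mul, mulVec_diagonal,
    Pi.inv_apply]

lemma two_mul_rnnCost_diagonal_sqrt_mul_add_le {E F : Fin d → ℝ} (hE : ∀ i, 0 < E i)
    (hF : ∀ i, 0 < F i) :
    2 * rnnCost Wrec Wff b C (diagonal fun i => √(E i * F i)) + ∑ i, (E i * b i - F i * b i) ^ 2
      ≤ rnnCost Wrec Wff b C (diagonal E) + rnnCost Wrec Wff b C (diagonal F) := by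
  have hG : ∀ i, √(E i * F i) ^ 2 = E i * F i := fun i => Real.sq_sqrt (mul_pos (hE i) (hF i)).le
  rw [rnnCost_diagonal _ _ _ _ fun i => (Real.sqrt_pos.2 (mul_pos (hE i) (hF i))).ne',
    rnnCost_diagonal _ _ _ _ fun i => (hE i).ne', rnnCost_diagonal _ _ _ _ fun i => (hF i).ne']
  have hrec := two_mul_sum_le_sum_add_sum Finset.univ fun i =>
    two_mul_sum_le_sum_add_sum Finset.univ fun j =>
      two_mul_sq_le_of_sq_eq_mul (u := E i * Wrec i j * (E j)⁻¹) (v := F i * Wrec i j * (F j)⁻¹)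
        (w := √(E i * F i) * Wrec i j * (√(E j * F j))⁻¹)
        (by rw [mul_pow, mul_pow, inv_pow, hG, hG]; ring)
  have hff := two_mul_sum_le_sum_add_sum Finset.univ fun i =>
    two_mul_sum_le_sum_add_sum Finset.univ fun j =>
      two_mul_sq_le_of_sq_eq_mul (u := E i * Wff i j) (v := F i * Wff i j)
        (w := √(E i * F i) * Wff i j) (by rw [mul_pow, hG]; ring)
  have hout := two_mul_sum_le_sum_add_sum Finset.univ fun i =>
    two_mul_sum_le_sum_add_sum Finset.univ fun j =>
      two_mul_sq_le_of_sq_eq_mul (u := C i j * (E j)⁻¹) (v := C i j * (F j)⁻¹)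
        (w := C i j * (√(E j * F j))⁻¹) (by rw [mul_pow, inv_pow, hG]; ring)
  have hbias : 2 * ∑ i, (√(E i * F i) * b i) ^ 2 + ∑ i, (E i * b i - F i * b i) ^ 2
      = ∑ i, (E i * b i) ^ 2 + ∑ i, (F i * b i) ^ 2 := by
    rw [Finset.mul_sum, ← Finset.sum_add_distrib, ← Finset.sum_add_distrib]
    exact Finset.sum_congr rfl fun i _ => two_mul_sq_add_sq_sub_eq (by rw [mul_pow, hG]; ring)
  linarith

end RNN

/-- If a scaled permutation `M = P̃ D` minimizes the squared parameter norm of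
the transformed RNN over all scaled permutations, and the identity also
achieves this minimum, then (assuming all bias entries are nonzero) the
scaling part is trivial: `D = I`. -/
theorem scaled_perm_min_norm_scaling_trivial (d p m : ℕ)
    (Wrec : Matrix (Fin d) (Fin d) ℝ) (Wff : Matrix (Fin d) (Fin p) ℝ)
    (b : Fin d → ℝ) (hb : ∀ i, b i ≠ 0)
    (C : Matrix (Fin m) (Fin d) ℝ)
    (e : Equiv.Perm (Fin d)) (D : Fin d → ℝ) (hD : ∀ i, 0 < D i)
    (hmin : ∀ (e' : Equiv.Perm (Fin d)) (D' : Fin d → ℝ), (∀ i, 0 < D' i) →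
      rnnCost Wrec Wff b C (e.permMatrix ℝ * Matrix.diagonal D) ≤
        rnnCost Wrec Wff b C (e'.permMatrix ℝ * Matrix.diagonal D'))
    (hminId : ∀ (e' : Equiv.Perm (Fin d)) (D' : Fin d → ℝ), (∀ i, 0 < D' i) →
      rnnCost Wrec Wff b C 1 ≤
        rnnCost Wrec Wff b C (e'.permMatrix ℝ * Matrix.diagonal D')) :
    ∀ i, D i = 1 := by
  have hD_eq : rnnCost Wrec Wff b C (diagonal D) = rnnCost Wrec Wff b C 1 := by
    rw [← rnnCost_permMatrix_mul _ _ _ _ e]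
    exact le_antisymm (by simpa using hmin 1 1 fun _ => one_pos) (hminId e D hD)
  have hsqrt_ge : rnnCost Wrec Wff b C 1 ≤ rnnCost Wrec Wff b C (diagonal fun i => √(D i)) := by
    simpa using hminId 1 _ fun i => Real.sqrt_pos.2 (hD i)
  have hmid := two_mul_rnnCost_diagonal_sqrt_mul_add_le Wrec Wff b C (F := 1) hD fun _ => one_pos
  rw [show (diagonal 1 : Matrix (Fin d) (Fin d) ℝ) = 1 from diagonal_one] at hmid
  simp only [Pi.one_apply, mul_one, one_mul] at hmid
  have hsum : ∑ i, (D i * b i - b i) ^ 2 = 0 :=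
    le_antisymm (by linarith) (Finset.sum_nonneg fun i _ => sq_nonneg _)
  intro i
  have hi := (Finset.sum_eq_zero_iff_of_nonneg fun i _ => sq_nonneg _).1 hsum i (Finset.mem_univ i)
  exact mul_right_cancel₀ (hb i) (by simpa [sub_eq_zero] using hi)
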